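/- arXiv:2207.04083 — 3 statements merged into one kernel-verified Lean document; each statement's English description precedes it below -/
import Mathlib

section
/- Let X be an n×n real matrix with XᵀX = Iₙ (orthonormal), let y ∈ ℝⁿ with y ≠ 0, and for λ ≥ 0 define L(α) = ‖y − Xα‖₂ + λ‖α‖₂ for α ∈ ℝⁿ. Then the least squares solution α = Xᵀy is a global minimizer of L if and only if λ ≤ 1. -/
open scoped BigOperators

/-- Euclidean norm of a vector in `ℝᵐ`. -/
noncomputable def norm2 {m : ℕ} (v : Fin m → ℝ) : ℝ := Real.sqrt (∑ i, (v i) ^ 2)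

/-- The square-root group-LASSO objective with orthonormal design:
`L(α) = ‖y − Xα‖₂ + λ‖α‖₂`. -/
noncomputable def sqrtGroupLassoObj {n : ℕ} (X : Matrix (Fin n) (Fin n) ℝ)
    (y : Fin n → ℝ) (lam : ℝ) (α : Fin n → ℝ) : ℝ :=
  norm2 (y - X.mulVec α) + lam * norm2 α

/-!
Since `XᵀX = 1` forces `XXᵀ = 1`, `X` is an isometry and `y - Xα = X (Xᵀy - α)`, so
`L(α) = ‖c - α‖ + λ‖α‖` with `c = Xᵀy ≠ 0`, and `L(c) = λ‖c‖`. For `λ ≤ 1` the triangle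
inequality `‖c‖ ≤ ‖c - α‖ + ‖α‖` gives `λ‖c‖ ≤ λ‖c - α‖ + λ‖α‖ ≤ L(α)`; for `λ > 1` the point
`α = 0` does better, `L(0) = ‖c‖ < λ‖c‖`.
-/

open scoped Matrix

lemma norm2_eq_norm_toLp {m : ℕ} (v : Fin m → ℝ) : norm2 v = ‖WithLp.toLp 2 v‖ := by
  simp [EuclideanSpace.norm_eq, norm2]

lemma norm2_eq_sqrt_dotProduct {m : ℕ} (v : Fin m → ℝ) : norm2 v = √(v ⬝ᵥ v) := by
  simp [norm2, dotProduct, sq]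

lemma norm2_mulVec_of_transpose_mul_eq_one {k m : ℕ} {X : Matrix (Fin k) (Fin m) ℝ}
    (hX : Xᵀ * X = 1) (v : Fin m → ℝ) : norm2 (X *ᵥ v) = norm2 v := by
  rw [norm2_eq_sqrt_dotProduct, norm2_eq_sqrt_dotProduct, Matrix.dotProduct_mulVec,
    ← Matrix.mulVec_transpose, Matrix.mulVec_mulVec, hX, Matrix.one_mulVec]

lemma sqrtGroupLassoObj_eq_of_transpose_mul_eq_one {n : ℕ} {X : Matrix (Fin n) (Fin n) ℝ}
    (hX : Xᵀ * X = 1) (y : Fin n → ℝ) (lam : ℝ) (α : Fin n → ℝ) :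
    sqrtGroupLassoObj X y lam α =
      ‖WithLp.toLp 2 (Xᵀ *ᵥ y) - WithLp.toLp 2 α‖ + lam * ‖WithLp.toLp 2 α‖ := by
  have hy : X *ᵥ (Xᵀ *ᵥ y) = y := by
    rw [Matrix.mulVec_mulVec, mul_eq_one_comm.mp hX, Matrix.one_mulVec]
  rw [sqrtGroupLassoObj, ← hy, ← Matrix.mulVec_sub, norm2_mulVec_of_transpose_mul_eq_one hX, hy,
    norm2_eq_norm_toLp, norm2_eq_norm_toLp, WithLp.toLp_sub]

theorem forall_mul_norm_le_norm_sub_add_mul_norm_iff {E : Type*} [NormedAddCommGroup E]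
    {c : E} (hc : c ≠ 0) {lam : ℝ} (hlam : 0 ≤ lam) :
    (∀ a : E, lam * ‖c‖ ≤ ‖c - a‖ + lam * ‖a‖) ↔ lam ≤ 1 := by
  constructor
  · intro h
    have h0 := h 0
    rw [sub_zero, norm_zero, mul_zero, add_zero] at h0
    exact (mul_le_iff_le_one_left (norm_pos_iff.mpr hc)).mp h0
  · intro hl a
    calc lam * ‖c‖ ≤ lam * (‖c - a‖ + ‖a‖) := by
          gcongr
          exact norm_le_norm_sub_add c a
      _ ≤ ‖c - a‖ + lam * ‖a‖ := by
          rw [mul_add]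
          gcongr
          exact mul_le_of_le_one_left (norm_nonneg _) hl

/-- With orthonormal design `XᵀX = Iₙ` and `y ≠ 0`, the least squares solution
`α = Xᵀy` is a global minimizer of `L(α) = ‖y − Xα‖₂ + λ‖α‖₂` iff `λ ≤ 1`. -/
theorem leastSquares_isMinimizer_iff {n : ℕ} (X : Matrix (Fin n) (Fin n) ℝ)
    (hX : X.transpose * X = 1) (y : Fin n → ℝ) (hy : y ≠ 0)
    (lam : ℝ) (hlam : 0 ≤ lam) :
    (∀ α : Fin n → ℝ,
        sqrtGroupLassoObj X y lam (X.transpose.mulVec y) ≤ sqrtGroupLassoObj X y lam α) ↔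
      lam ≤ 1 := by
  have hc : WithLp.toLp 2 (Xᵀ *ᵥ y) ≠ 0 := by
    rw [Ne, WithLp.toLp_eq_zero]
    rintro h
    apply hy
    rw [← Matrix.one_mulVec y, ← mul_eq_one_comm.mp hX, ← Matrix.mulVec_mulVec, h,
      Matrix.mulVec_zero]
  simp only [sqrtGroupLassoObj_eq_of_transpose_mul_eq_one hX, sub_self, norm_zero, zero_add]
  rw [← forall_mul_norm_le_norm_sub_add_mul_norm_iff hc hlam, (WithLp.toLp_surjective 2).forall]
end

section
/- Let z ∈ ℝᵐ with z ≠ 0, let λ > 0, and define G(β) = ‖z − β‖₂ + λ‖β‖₁ for β ∈ ℝᵐ. Then the zero vector β = 0 is a global minimizer of G if and only if λ·‖z‖₂ ≥ ‖z‖_∞, where ‖z‖_∞ = max_i |z_i|. -/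
open scoped BigOperators

/-- ℓ1-norm of a vector in `ℝᵐ`. -/
noncomputable def norm1 {m : ℕ} (v : Fin m → ℝ) : ℝ := ∑ i, |v i|

/-- Sup-norm of a vector in `ℝᵐ`: `‖v‖_∞ = maxᵢ |vᵢ|`. -/
noncomputable def norminf {m : ℕ} (v : Fin m → ℝ) : ℝ := ⨆ i, |v i|

/-- The square-root soft-waveshrink objective in the orthonormal wavelet domain:
`G(β) = ‖z − β‖₂ + λ‖β‖₁`. -/
noncomputable def srswObj {m : ℕ} (z : Fin m → ℝ) (lam : ℝ) (β : Fin m → ℝ) : ℝ :=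
  norm2 (z - β) + lam * norm1 β

/-!
If `0` minimizes `G`, then comparing `G 0 = ‖z‖₂` with `G (t • ±eᵢ)` gives
`‖z‖₂ - λt ≤ ‖z - t • ±eᵢ‖₂`; squaring, dividing by `t` and letting `t → 0⁺` yields
`±zᵢ ≤ λ‖z‖₂`. Conversely, by Cauchy–Schwarz and Hölder,
`‖z‖₂² = ⟨z, z - β⟩ + ⟨z, β⟩ ≤ ‖z‖₂ ‖z - β‖₂ + ‖z‖_∞ ‖β‖₁ ≤ ‖z‖₂ (‖z - β‖₂ + λ‖β‖₁)`,
and `z ≠ 0` lets us divide by `‖z‖₂`.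
-/

open Filter Topology

theorem le_of_eventually_le_add_mul {a b K : ℝ} (h : ∀ᶠ t in 𝓝[>] (0 : ℝ), a ≤ b + K * t) :
    a ≤ b :=
  ge_of_tendsto (tendsto_nhdsWithin_of_tendsto_nhds <|
    Continuous.tendsto' (by fun_prop) _ _ (by simp)) h

section Norms

variable {m : ℕ}

theorem norm2_sq (v : Fin m → ℝ) : norm2 v ^ 2 = ∑ i, v i ^ 2 :=
  Real.sq_sqrt (Finset.sum_nonneg fun _ _ => sq_nonneg _)

theorem norm2_pos {v : Fin m → ℝ} (hv : v ≠ 0) : 0 < norm2 v := by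
  obtain ⟨i, hi⟩ := Function.ne_iff.1 hv
  exact Real.sqrt_pos.2 <| (pow_pos (abs_pos.2 hi) 2).trans_le <| by
    simpa only [sq_abs] using
      Finset.single_le_sum (f := fun j => v j ^ 2) (fun _ _ => sq_nonneg _) (Finset.mem_univ i)

theorem abs_le_norminf (v : Fin m → ℝ) (i : Fin m) : |v i| ≤ norminf v :=
  le_ciSup (f := fun j => |v j|) (Set.finite_range _).bddAbove i

theorem sum_mul_le_norminf_mul_norm1 (v w : Fin m → ℝ) : ∑ i, v i * w i ≤ norminf v * norm1 w :=
  calc ∑ i, v i * w i ≤ ∑ i, norminf v * |w i| := Finset.sum_le_sum fun i _ =>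
        (le_abs_self _).trans <| (abs_mul _ _).trans_le <|
          mul_le_mul_of_nonneg_right (abs_le_norminf v i) (abs_nonneg _)
    _ = norminf v * norm1 w := (Finset.mul_sum _ _ _).symm

theorem norminf_le_iff [Nonempty (Fin m)] {v : Fin m → ℝ} {a : ℝ} :
    norminf v ≤ a ↔ ∀ i, |v i| ≤ a :=
  ciSup_le_iff (Set.finite_range _).bddAbove

theorem norm1_single (i : Fin m) (c : ℝ) : norm1 (Pi.single i c : Fin m → ℝ) = |c| := by
  simp only [norm1, Pi.single_apply, apply_ite, abs_zero, Finset.sum_ite_eq', Finset.mem_univ,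
    if_true]

theorem sq_norm2_sub_single (z : Fin m → ℝ) (i : Fin m) (c : ℝ) :
    norm2 (z - Pi.single i c) ^ 2 = norm2 z ^ 2 - 2 * c * z i + c ^ 2 := by
  simp only [norm2_sq, Pi.sub_apply, sub_sq, Finset.sum_add_distrib, Finset.sum_sub_distrib,
    Pi.single_apply, mul_ite, ite_pow, mul_zero, ne_eq, OfNat.ofNat_ne_zero,
    not_false_eq_true, zero_pow, Finset.sum_ite_eq', Finset.mem_univ, if_true]
  ring

end Norms

section Objective

variable {m : ℕ} (z : Fin m → ℝ) (lam : ℝ)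

theorem srswObj_zero : srswObj z lam 0 = norm2 z := by
  simp [srswObj, norm1]

theorem srswObj_single (i : Fin m) (c : ℝ) :
    srswObj z lam (Pi.single i c) = norm2 (z - Pi.single i c) + lam * |c| := by
  rw [srswObj, norm1_single]

theorem norm2_le_srswObj (hz : 0 < norm2 z) (h : norminf z ≤ lam * norm2 z)
    (β : Fin m → ℝ) : norm2 z ≤ srswObj z lam β := by
  have hsplit : norm2 z ^ 2 = ∑ j, z j * (z j - β j) + ∑ j, z j * β j := by
    rw [norm2_sq, ← Finset.sum_add_distrib]
    exact Finset.sum_congr rfl fun j _ => by ring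
  have hcs : ∑ j, z j * (z j - β j) ≤ norm2 z * norm2 (z - β) :=
    Real.sum_mul_le_sqrt_mul_sqrt _ _ _
  have hholder := sum_mul_le_norminf_mul_norm1 z β
  have hβ : 0 ≤ norm1 β := Finset.sum_nonneg fun _ _ => abs_nonneg _
  refine le_of_mul_le_mul_left ?_ hz
  rw [srswObj, mul_add, ← sq]
  nlinarith [mul_le_mul_of_nonneg_right h hβ]

variable {z lam} {i : Fin m}

theorem mul_le_of_norm2_le_srswObj_single {c : ℝ} (h : norm2 z ≤ srswObj z lam (Pi.single i c))
    (hc : lam * |c| ≤ norm2 z) :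
    2 * (c * z i) ≤ 2 * lam * |c| * norm2 z + (1 - lam ^ 2) * c ^ 2 := by
  rw [srswObj_single] at h
  have hsq := pow_le_pow_left₀ (sub_nonneg.2 hc) (sub_le_iff_le_add.2 h) 2
  rw [sq_norm2_sub_single] at hsq
  nlinarith [sq_abs c]

theorem abs_le_of_norm2_le_srswObj_single (hz : 0 < norm2 z)
    (h : ∀ c, norm2 z ≤ srswObj z lam (Pi.single i c)) : |z i| ≤ lam * norm2 z := by
  have hsmall : ∀ᶠ t in 𝓝[>] (0 : ℝ), lam * t < norm2 z :=
    tendsto_nhdsWithin_of_tendsto_nhds ((continuous_const.mul continuous_id).tendsto' 0 0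
      (mul_zero lam)) |>.eventually (gt_mem_nhds hz)
  have hsign : ∀ s : ℝ, |s| = 1 → s * z i ≤ lam * norm2 z := by
    intro s hs
    refine le_of_eventually_le_add_mul (K := (1 - lam ^ 2) / 2) ?_
    filter_upwards [hsmall, self_mem_nhdsWithin] with t hlt (ht : 0 < t)
    have habs : |s * t| = t := by rw [abs_mul, hs, one_mul, abs_of_pos ht]
    have key := mul_le_of_norm2_le_srswObj_single (h (s * t)) (by rw [habs]; exact hlt.le)
    rw [habs, mul_pow, ← sq_abs s, hs] at key
    nlinarith
  exact abs_le.2 ⟨by linarith [hsign (-1) (by norm_num)], by simpa using hsign 1 (by norm_num)⟩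

end Objective

theorem zero_isMinimizer_iff_srsw_general {m : ℕ} (z : Fin m → ℝ) (hz : z ≠ 0)
    (lam : ℝ) :
    (∀ β : Fin m → ℝ, srswObj z lam 0 ≤ srswObj z lam β) ↔
      norminf z ≤ lam * norm2 z := by
  have hpos := norm2_pos hz
  obtain ⟨j, -⟩ := Function.ne_iff.1 hz
  have : Nonempty (Fin m) := ⟨j⟩
  rw [srswObj_zero]
  refine ⟨fun hmin => norminf_le_iff.2 fun i => ?_, norm2_le_srswObj z lam hpos⟩
  exact abs_le_of_norm2_le_srswObj_single hpos fun c => hmin _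

/-- For `z ≠ 0` and `λ > 0`, the zero vector is a global minimizer of
`G(β) = ‖z − β‖₂ + λ‖β‖₁` if and only if `λ‖z‖₂ ≥ ‖z‖_∞`. -/
theorem zero_isMinimizer_iff_srsw {m : ℕ} (z : Fin m → ℝ) (hz : z ≠ 0)
    (lam : ℝ) (hlam : 0 < lam) :
    (∀ β : Fin m → ℝ, srswObj z lam 0 ≤ srswObj z lam β) ↔
      norminf z ≤ lam * norm2 z :=
  zero_isMinimizer_iff_srsw_general z hz lam
end

section
/- Fix β ∈ ℝᵐ and λ > 0, and define H(z) = η_{λ‖z−β‖₂}(z) ∈ ℝᵐ, where the soft-thresholding function η_t(x) = sign(x)·max(|x| − t, 0) is applied componentwise. Then H is Lipschitz continuous with Lipschitz constant (2 + λ)√m: for all z₁, z₂ ∈ ℝᵐ, ‖H(z₁) − H(z₂)‖₂ ≤ (2 + λ)√m · ‖z₁ − z₂‖₂. -/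
open scoped BigOperators

/-- Soft-thresholding with threshold `t`: `η_t(x) = sign(x)·max(|x| − t, 0)`. -/
noncomputable def soft (t x : ℝ) : ℝ := Real.sign x * max (|x| - t) 0

/-!
Soft thresholding is `x` minus the clamp of `x` to `[-t, t]`, hence 2-Lipschitz in `x`, and it is
1-Lipschitz in the threshold `t`. The threshold `λ‖z - β‖₂` is λ-Lipschitz in `z`, so every
coordinate of `H z₁ - H z₂` is bounded by `(2 + λ)‖z₁ - z₂‖₂`; summing `m` squares gives `√m`.
-/

section Norm2

variable {m : ℕ}

lemma norm2_eq_norm (v : Fin m → ℝ) : norm2 v = ‖WithLp.toLp 2 v‖ := by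
  simp [norm2, EuclideanSpace.norm_eq]

lemma norm2_nonneg (v : Fin m → ℝ) : 0 ≤ norm2 v := Real.sqrt_nonneg _

lemma abs_apply_le_norm2 (v : Fin m → ℝ) (i : Fin m) : |v i| ≤ norm2 v := by
  simpa [norm2_eq_norm] using PiLp.norm_apply_le (WithLp.toLp 2 v) i

lemma abs_norm2_sub_norm2_le (v w : Fin m → ℝ) : |norm2 v - norm2 w| ≤ norm2 (v - w) := by
  simpa only [norm2_eq_norm, WithLp.toLp_sub] using abs_norm_sub_norm_le _ _

lemma norm2_le_sqrt_mul_of_abs_le {v : Fin m → ℝ} {c : ℝ} (hc : 0 ≤ c) (hv : ∀ i, |v i| ≤ c) :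
    norm2 v ≤ Real.sqrt m * c := by
  have hsum : ∑ i, v i ^ 2 ≤ m * c ^ 2 := by
    simpa using Finset.sum_le_sum (s := Finset.univ) fun i _ =>
      sq_le_sq' (abs_le.1 (hv i)).1 (abs_le.1 (hv i)).2
  calc norm2 v ≤ Real.sqrt (m * c ^ 2) := Real.sqrt_le_sqrt hsum
    _ = Real.sqrt m * c := by rw [Real.sqrt_mul (Nat.cast_nonneg m), Real.sqrt_sq hc]

end Norm2

lemma Real.abs_sign_le_one (x : ℝ) : |Real.sign x| ≤ 1 := by
  rcases Real.sign_apply_eq x with h | h | h <;> simp [h]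

lemma abs_soft_sub_soft_le_abs_sub (t s x : ℝ) : |soft t x - soft s x| ≤ |t - s| :=
  calc |soft t x - soft s x| = |Real.sign x| * |max (|x| - t) 0 - max (|x| - s) 0| := by
        rw [soft, soft, ← mul_sub, abs_mul]
    _ ≤ 1 * |(|x| - t) - (|x| - s)| :=
        mul_le_mul (Real.abs_sign_le_one x) (abs_max_sub_max_le_abs _ _ _) (abs_nonneg _) zero_le_one
    _ = |t - s| := by rw [one_mul, sub_sub_sub_cancel_left, abs_sub_comm]

lemma soft_eq_sub_clamp {t : ℝ} (ht : 0 ≤ t) (x : ℝ) : soft t x = x - max (min x t) (-t) := by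
  rcases lt_trichotomy x 0 with hx | rfl | hx
  · rw [soft, Real.sign_of_neg hx, abs_of_neg hx, min_eq_left (by linarith)]
    rcases le_total (-t) x with h | h
    · rw [max_eq_right (by linarith), max_eq_left h]; ring
    · rw [max_eq_left (by linarith), max_eq_right h]; ring
  · simp [soft, ht]
  · rw [soft, Real.sign_of_pos hx, abs_of_pos hx, max_eq_left (le_min (by linarith) (by linarith))]
    rcases le_total x t with h | h
    · rw [max_eq_right (by linarith), min_eq_left h]; ring
    · rw [max_eq_left (by linarith), min_eq_right h]; ring

lemma abs_clamp_sub_clamp_le (t x y : ℝ) : |max (min x t) (-t) - max (min y t) (-t)| ≤ |x - y| :=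
  (abs_max_sub_max_le_abs _ _ _).trans (abs_min_sub_min_le_max x t y t |>.trans (by simp))

lemma abs_soft_sub_soft_le_two_mul {t : ℝ} (ht : 0 ≤ t) (x y : ℝ) :
    |soft t x - soft t y| ≤ 2 * |x - y| := by
  rw [soft_eq_sub_clamp ht, soft_eq_sub_clamp ht, sub_sub_sub_comm]
  linarith [abs_sub (x - y) (max (min x t) (-t) - max (min y t) (-t)), abs_clamp_sub_clamp_le t x y]

lemma abs_soft_sub_soft_le {t : ℝ} (ht : 0 ≤ t) (s x y : ℝ) :
    |soft t x - soft s y| ≤ 2 * |x - y| + |t - s| :=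
  (abs_sub_le _ (soft t y) _).trans
    (add_le_add (abs_soft_sub_soft_le_two_mul ht x y) (abs_soft_sub_soft_le_abs_sub t s y))

/-- For fixed `β` and `λ > 0`, the map `z ↦ η_{λ‖z−β‖₂}(z)` is Lipschitz with
constant `(2 + λ)√m`. -/
theorem lipschitz_in_z {m : ℕ} (β : Fin m → ℝ) (lam : ℝ) (hlam : 0 < lam) :
    ∀ z₁ z₂ : Fin m → ℝ,
      norm2 ((fun i => soft (lam * norm2 (z₁ - β)) (z₁ i)) -
              (fun i => soft (lam * norm2 (z₂ - β)) (z₂ i))) ≤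
        (2 + lam) * Real.sqrt m * norm2 (z₁ - z₂) := by
  intro z₁ z₂
  set D := norm2 (z₁ - z₂)
  have hthreshold : |lam * norm2 (z₁ - β) - lam * norm2 (z₂ - β)| ≤ lam * D := by
    rw [← mul_sub, abs_mul, abs_of_pos hlam]
    simpa using mul_le_mul_of_nonneg_left (abs_norm2_sub_norm2_le (z₁ - β) (z₂ - β)) hlam.le
  have hcoord : ∀ i, |soft (lam * norm2 (z₁ - β)) (z₁ i) - soft (lam * norm2 (z₂ - β)) (z₂ i)|
      ≤ (2 + lam) * D := fun i => by
    have hz : |z₁ i - z₂ i| ≤ D := abs_apply_le_norm2 (z₁ - z₂) i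
    have ht : 0 ≤ lam * norm2 (z₁ - β) := mul_nonneg hlam.le (norm2_nonneg _)
    linarith [abs_soft_sub_soft_le ht (lam * norm2 (z₂ - β)) (z₁ i) (z₂ i)]
  calc _ ≤ Real.sqrt m * ((2 + lam) * D) :=
        norm2_le_sqrt_mul_of_abs_le (mul_nonneg (by positivity) (norm2_nonneg _)) hcoord
    _ = (2 + lam) * Real.sqrt m * D := by ring
end
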